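/- There exists a real-analytic function ψ : ℝ² → ℝ with the following properties, where z₀ = (π, π/√3), z₁ = (0,0), z₂ = (0, 2π/√3): (W1) Δψ + 4ψ = 0 on ℝ²; (W2) for every integer k, ψ(kπ, y) = 0 for all y and ψ(2kπ − x, y) = −ψ(x,y) for all (x,y) (ψ is odd about each line x = kπ); (W3) ψ(x,−y) = ψ(x,y) for all (x,y) (ψ is even about the x-axis); (W4) the gradient Dψ(z₀) = 0 and the Hessian D²ψ(z₀) = 0; (W5) ∂ψ/∂x(z₁) < 0, ∂ψ/∂x(z₂) > 0, and ∂²ψ/∂x∂y(z₂) > 0. -/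
import Mathlib


open Real

/-- The planar Laplacian of `ψ : ℝ² → ℝ`: `Δψ = ∂²ψ/∂x² + ∂²ψ/∂y²`. -/
noncomputable def planarLaplacian (ψ : ℝ × ℝ → ℝ) (p : ℝ × ℝ) : ℝ :=
  deriv (fun t => deriv (fun s => ψ (s, p.2)) t) p.1 +
  deriv (fun t => deriv (fun s => ψ (p.1, s)) t) p.2

namespace PsiAux

noncomputable def th3 : ℝ := Real.sqrt 5 * (π / Real.sqrt 3)
noncomputable def th5 : ℝ := Real.sqrt 21 * (π / Real.sqrt 3)
noncomputable def S3 : ℝ := Real.sinh th3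
noncomputable def S5 : ℝ := Real.sinh th5
noncomputable def C3 : ℝ := Real.cosh th3
noncomputable def C5 : ℝ := Real.cosh th5
noncomputable def c3 : ℝ := -(5 * Real.sqrt 21 * S5)
noncomputable def c5 : ℝ := 3 * Real.sqrt 5 * S3
noncomputable def a1 : ℝ := 3 * c3 * C3 + 5 * c5 * C5

noncomputable def psi : ℝ × ℝ → ℝ := fun p =>
  a1 * (Real.sin p.1 * Real.cos (Real.sqrt 3 * p.2)) +
  (c3 * (Real.sin (3 * p.1) * Real.cosh (Real.sqrt 5 * p.2)) +
   c5 * (Real.sin (5 * p.1) * Real.cosh (Real.sqrt 21 * p.2)))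

noncomputable def px : ℝ × ℝ → ℝ := fun p =>
  a1 * (Real.cos p.1 * Real.cos (Real.sqrt 3 * p.2)) +
  (c3 * (3 * Real.cos (3 * p.1) * Real.cosh (Real.sqrt 5 * p.2)) +
   c5 * (5 * Real.cos (5 * p.1) * Real.cosh (Real.sqrt 21 * p.2)))

noncomputable def py : ℝ × ℝ → ℝ := fun p =>
  a1 * (Real.sin p.1 * -(Real.sqrt 3 * Real.sin (Real.sqrt 3 * p.2))) +
  (c3 * (Real.sin (3 * p.1) * (Real.sqrt 5 * Real.sinh (Real.sqrt 5 * p.2))) +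
   c5 * (Real.sin (5 * p.1) * (Real.sqrt 21 * Real.sinh (Real.sqrt 21 * p.2))))

noncomputable def pxx : ℝ × ℝ → ℝ := fun p =>
  a1 * (-Real.sin p.1 * Real.cos (Real.sqrt 3 * p.2)) +
  (c3 * (3 * -(3 * Real.sin (3 * p.1)) * Real.cosh (Real.sqrt 5 * p.2)) +
   c5 * (5 * -(5 * Real.sin (5 * p.1)) * Real.cosh (Real.sqrt 21 * p.2)))

noncomputable def pxy : ℝ × ℝ → ℝ := fun p =>
  a1 * (Real.cos p.1 * -(Real.sqrt 3 * Real.sin (Real.sqrt 3 * p.2))) +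
  (c3 * (3 * Real.cos (3 * p.1) * (Real.sqrt 5 * Real.sinh (Real.sqrt 5 * p.2))) +
   c5 * (5 * Real.cos (5 * p.1) * (Real.sqrt 21 * Real.sinh (Real.sqrt 21 * p.2))))

noncomputable def pyy : ℝ × ℝ → ℝ := fun p =>
  a1 * (Real.sin p.1 * -(Real.sqrt 3 * (Real.sqrt 3 * Real.cos (Real.sqrt 3 * p.2)))) +
  (c3 * (Real.sin (3 * p.1) * (Real.sqrt 5 * (Real.sqrt 5 * Real.cosh (Real.sqrt 5 * p.2)))) +
   c5 * (Real.sin (5 * p.1) * (Real.sqrt 21 * (Real.sqrt 21 * Real.cosh (Real.sqrt 21 * p.2)))))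

lemma hd_lin (c x : ℝ) : HasDerivAt (fun s : ℝ => c * s) c x := by
  simpa using (hasDerivAt_id x).const_mul c

lemma hd_sin (c x : ℝ) : HasDerivAt (fun s => Real.sin (c * s)) (c * Real.cos (c * x)) x :=
  ((hd_lin c x).sin).congr_deriv (by ring)

lemma hd_cos (c x : ℝ) : HasDerivAt (fun s => Real.cos (c * s)) (-(c * Real.sin (c * x))) x :=
  ((hd_lin c x).cos).congr_deriv (by ring)

lemma hd_cosh (c x : ℝ) : HasDerivAt (fun s => Real.cosh (c * s)) (c * Real.sinh (c * x)) x :=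
  ((hd_lin c x).cosh).congr_deriv (by ring)

lemma hd_sinh (c x : ℝ) : HasDerivAt (fun s => Real.sinh (c * s)) (c * Real.cosh (c * x)) x :=
  ((hd_lin c x).sinh).congr_deriv (by ring)

lemma hderiv_x (x y : ℝ) : HasDerivAt (fun s => psi (s, y)) (px (x, y)) x := by
  exact (((Real.hasDerivAt_sin x).mul_const (Real.cos (Real.sqrt 3 * y))).const_mul a1).add
    ((((hd_sin 3 x).mul_const (Real.cosh (Real.sqrt 5 * y))).const_mul c3).add
     (((hd_sin 5 x).mul_const (Real.cosh (Real.sqrt 21 * y))).const_mul c5))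

lemma hderiv_y (x y : ℝ) : HasDerivAt (fun s => psi (x, s)) (py (x, y)) y := by
  exact ((((hd_cos (Real.sqrt 3) y).const_mul (Real.sin x))).const_mul a1).add
    ((((hd_cosh (Real.sqrt 5) y).const_mul (Real.sin (3 * x))).const_mul c3).add
     (((hd_cosh (Real.sqrt 21) y).const_mul (Real.sin (5 * x))).const_mul c5))

lemma hderiv_xx (x y : ℝ) : HasDerivAt (fun s => px (s, y)) (pxx (x, y)) x := by
  exact (((Real.hasDerivAt_cos x).mul_const (Real.cos (Real.sqrt 3 * y))).const_mul a1).add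
    (((((hd_cos 3 x).const_mul 3).mul_const (Real.cosh (Real.sqrt 5 * y))).const_mul c3).add
     ((((hd_cos 5 x).const_mul 5).mul_const (Real.cosh (Real.sqrt 21 * y))).const_mul c5))

lemma hderiv_xy (x y : ℝ) : HasDerivAt (fun s => px (x, s)) (pxy (x, y)) y := by
  exact (((hd_cos (Real.sqrt 3) y).const_mul (Real.cos x)).const_mul a1).add
    ((((hd_cosh (Real.sqrt 5) y).const_mul (3 * Real.cos (3 * x))).const_mul c3).add
     (((hd_cosh (Real.sqrt 21) y).const_mul (5 * Real.cos (5 * x))).const_mul c5))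

lemma hderiv_yx (x y : ℝ) : HasDerivAt (fun s => py (s, y)) (pxy (x, y)) x := by
  exact (((Real.hasDerivAt_sin x).mul_const
      (-(Real.sqrt 3 * Real.sin (Real.sqrt 3 * y)))).const_mul a1).add
    ((((hd_sin 3 x).mul_const (Real.sqrt 5 * Real.sinh (Real.sqrt 5 * y))).const_mul c3).add
     (((hd_sin 5 x).mul_const (Real.sqrt 21 * Real.sinh (Real.sqrt 21 * y))).const_mul c5))

lemma hderiv_yy (x y : ℝ) : HasDerivAt (fun s => py (x, s)) (pyy (x, y)) y := by
  exact (((((hd_sin (Real.sqrt 3) y).const_mul (Real.sqrt 3)).neg).const_mul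
      (Real.sin x)).const_mul a1).add
    (((((hd_sinh (Real.sqrt 5) y).const_mul (Real.sqrt 5)).const_mul
      (Real.sin (3 * x))).const_mul c3).add
     ((((hd_sinh (Real.sqrt 21) y).const_mul (Real.sqrt 21)).const_mul
      (Real.sin (5 * x))).const_mul c5))

noncomputable abbrev Fx : ℝ × ℝ →L[ℝ] ℝ := ContinuousLinearMap.fst ℝ ℝ ℝ
noncomputable abbrev Fy : ℝ × ℝ →L[ℝ] ℝ := ContinuousLinearMap.snd ℝ ℝ ℝ

lemma hasFDerivAt_mul2 {u v : ℝ → ℝ} {u' v' : ℝ} {x y : ℝ}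
    (hu : HasDerivAt u u' x) (hv : HasDerivAt v v' y) :
    HasFDerivAt (fun q : ℝ × ℝ => u q.1 * v q.2)
      ((u' * v y) • Fx + (u x * v') • Fy) (x, y) := by
  have h1 : HasFDerivAt (fun q : ℝ × ℝ => u q.1) (u' • Fx) (x, y) :=
    hu.comp_hasFDerivAt (x, y) hasFDerivAt_fst
  have h2 : HasFDerivAt (fun q : ℝ × ℝ => v q.2) (v' • Fy) (x, y) :=
    hv.comp_hasFDerivAt (x, y) hasFDerivAt_snd
  refine (h1.mul h2).congr_fderiv ?_
  ext q <;> simp <;> ring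

lemma hasFDerivAt_psi (p : ℝ × ℝ) : HasFDerivAt psi (px p • Fx + py p • Fy) p := by
  obtain ⟨x, y⟩ := p
  have t1 := hasFDerivAt_mul2 (Real.hasDerivAt_sin x) (hd_cos (Real.sqrt 3) y)
  have t2 := hasFDerivAt_mul2 (hd_sin 3 x) (hd_cosh (Real.sqrt 5) y)
  have t3 := hasFDerivAt_mul2 (hd_sin 5 x) (hd_cosh (Real.sqrt 21) y)
  refine ((t1.const_mul a1).add ((t2.const_mul c3).add (t3.const_mul c5))).congr_fderiv ?_
  ext q <;> simp [px, py] <;> ring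

lemma hasFDerivAt_px (p : ℝ × ℝ) : HasFDerivAt px (pxx p • Fx + pxy p • Fy) p := by
  obtain ⟨x, y⟩ := p
  have t1 := hasFDerivAt_mul2 (Real.hasDerivAt_cos x) (hd_cos (Real.sqrt 3) y)
  have t2 := hasFDerivAt_mul2 ((hd_cos 3 x).const_mul 3) (hd_cosh (Real.sqrt 5) y)
  have t3 := hasFDerivAt_mul2 ((hd_cos 5 x).const_mul 5) (hd_cosh (Real.sqrt 21) y)
  refine ((t1.const_mul a1).add ((t2.const_mul c3).add (t3.const_mul c5))).congr_fderiv ?_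
  ext q <;> simp [pxx, pxy] <;> ring

lemma hasFDerivAt_py (p : ℝ × ℝ) : HasFDerivAt py (pxy p • Fx + pyy p • Fy) p := by
  obtain ⟨x, y⟩ := p
  have t1 := hasFDerivAt_mul2 (Real.hasDerivAt_sin x) (((hd_sin (Real.sqrt 3) y).const_mul (Real.sqrt 3)).neg)
  have t2 := hasFDerivAt_mul2 (hd_sin 3 x) ((hd_sinh (Real.sqrt 5) y).const_mul (Real.sqrt 5))
  have t3 := hasFDerivAt_mul2 (hd_sin 5 x) ((hd_sinh (Real.sqrt 21) y).const_mul (Real.sqrt 21))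
  refine ((t1.const_mul a1).add ((t2.const_mul c3).add (t3.const_mul c5))).congr_fderiv ?_
  ext q <;> simp [pxy, pyy] <;> ring

/-! ### values at special points -/

lemma arg3 : Real.sqrt 3 * (π / Real.sqrt 3) = π := by
  have h : Real.sqrt 3 ≠ 0 := by positivity
  field_simp

lemma cos_3pi : Real.cos (3 * π) = -1 := by
  rw [show (3:ℝ) * π = π + 2 * π by ring, Real.cos_add_two_pi, Real.cos_pi]

lemma cos_5pi : Real.cos (5 * π) = -1 := by
  rw [show (5:ℝ) * π = π + 2 * π + 2 * π by ring, Real.cos_add_two_pi,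
    Real.cos_add_two_pi, Real.cos_pi]

lemma sin_3pi : Real.sin (3 * π) = 0 := by
  rw [show (3:ℝ) * π = ((3:ℤ):ℝ) * π by norm_num]; exact Real.sin_int_mul_pi 3

lemma sin_5pi : Real.sin (5 * π) = 0 := by
  rw [show (5:ℝ) * π = ((5:ℤ):ℝ) * π by norm_num]; exact Real.sin_int_mul_pi 5

lemma px0 : px (π, π / Real.sqrt 3) = 0 := by
  simp only [px, arg3, cos_3pi, cos_5pi, Real.cos_pi]
  simp only [a1, c3, c5, C3, C5, th3, th5]
  ring

lemma py0 : py (π, π / Real.sqrt 3) = 0 := by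
  simp only [py, arg3, sin_3pi, sin_5pi, Real.sin_pi]
  ring

lemma pxx0 : pxx (π, π / Real.sqrt 3) = 0 := by
  simp only [pxx, arg3, sin_3pi, sin_5pi, Real.sin_pi]
  ring

lemma pyy0 : pyy (π, π / Real.sqrt 3) = 0 := by
  simp only [pyy, arg3, sin_3pi, sin_5pi, Real.sin_pi]
  ring

lemma pxy0 : pxy (π, π / Real.sqrt 3) = 0 := by
  simp only [pxy, arg3, cos_3pi, cos_5pi, Real.sin_pi]
  simp only [c3, c5, S3, S5, th3, th5]
  ring

/-! ### basic positivity facts -/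

lemma sqrt3_pos : (0:ℝ) < Real.sqrt 3 := Real.sqrt_pos.2 (by norm_num)

lemma y0_pos : (0:ℝ) < π / Real.sqrt 3 := div_pos Real.pi_pos sqrt3_pos

lemma th3_pos : 0 < th3 := mul_pos (Real.sqrt_pos.2 (by norm_num)) y0_pos

lemma th5_pos : 0 < th5 := mul_pos (Real.sqrt_pos.2 (by norm_num)) y0_pos

lemma th3_lt_th5 : th3 < th5 :=
  mul_lt_mul_of_pos_right (Real.sqrt_lt_sqrt (by norm_num) (by norm_num)) y0_pos

lemma S3_pos : 0 < S3 := Real.sinh_pos_iff.2 th3_pos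

lemma S5_pos : 0 < S5 := Real.sinh_pos_iff.2 th5_pos

lemma C3_pos : 0 < C3 := Real.cosh_pos th3

lemma C5_pos : 0 < C5 := Real.cosh_pos th5

lemma S3_lt_S5 : S3 < S5 := Real.sinh_lt_sinh.2 th3_lt_th5

lemma C3_lt_C5 : C3 < C5 := by
  unfold C3 C5
  rw [Real.cosh_lt_cosh, abs_of_pos th3_pos, abs_of_pos th5_pos]
  exact th3_lt_th5

lemma SC_lt : S3 * C5 < S5 * C3 := by
  have h2 : Real.sinh (th3 - th5) < 0 := Real.sinh_neg_iff.2 (by linarith [th3_lt_th5])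
  rw [Real.sinh_sub] at h2
  unfold S3 S5 C3 C5
  linarith

lemma sqrt5_lt_sqrt21 : Real.sqrt 5 < Real.sqrt 21 :=
  Real.sqrt_lt_sqrt (by norm_num) (by norm_num)

lemma sqrt5_pos : (0:ℝ) < Real.sqrt 5 := Real.sqrt_pos.2 (by norm_num)

lemma sqrt21_pos : (0:ℝ) < Real.sqrt 21 := Real.sqrt_pos.2 (by norm_num)

lemma neg1 : a1 + c3 * 3 + c5 * 5 < 0 := by
  have f1 : Real.sqrt 5 * (S3 * C5) < Real.sqrt 21 * (S5 * C3) := by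
    calc Real.sqrt 5 * (S3 * C5) < Real.sqrt 5 * (S5 * C3) := by
          exact mul_lt_mul_of_pos_left SC_lt sqrt5_pos
      _ < Real.sqrt 21 * (S5 * C3) := by
          exact mul_lt_mul_of_pos_right sqrt5_lt_sqrt21 (mul_pos S5_pos C3_pos)
  have f2 : Real.sqrt 5 * S3 < Real.sqrt 21 * S5 := by
    calc Real.sqrt 5 * S3 < Real.sqrt 5 * S5 := mul_lt_mul_of_pos_left S3_lt_S5 sqrt5_pos
      _ < Real.sqrt 21 * S5 := mul_lt_mul_of_pos_right sqrt5_lt_sqrt21 S5_pos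
  unfold a1 c3 c5
  nlinarith [f1, f2]

lemma pos3core : 0 < c3 * (3 * (Real.sqrt 5 * Real.sinh (2 * th3)))
    + c5 * (5 * (Real.sqrt 21 * Real.sinh (2 * th5))) := by
  rw [Real.sinh_two_mul, Real.sinh_two_mul]
  have key : 0 < Real.sqrt 5 * Real.sqrt 21 * (S3 * S5 * (C5 - C3)) := by
    apply mul_pos (mul_pos sqrt5_pos sqrt21_pos)
    apply mul_pos (mul_pos S3_pos S5_pos)
    linarith [C3_lt_C5]
  unfold c3 c5
  unfold S3 S5 C3 C5 at key
  unfold S3 S5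
  nlinarith [key]

lemma exp_one_sq : (7:ℝ) ≤ Real.exp 1 ^ 2 := by
  nlinarith [Real.exp_one_gt_d9]

lemma exp_one_cube : (19:ℝ) ≤ Real.exp 1 ^ 3 := by
  have h : (2.7:ℝ) ≤ Real.exp 1 := by linarith [Real.exp_one_gt_d9]
  have h2 : (2.7:ℝ) ^ 3 ≤ Real.exp 1 ^ 3 := pow_le_pow_left₀ (by norm_num) h 3
  nlinarith [h2]

lemma y0_ge : (3:ℝ)/2 ≤ π / Real.sqrt 3 := by
  rw [div_le_div_iff₀ (by norm_num) sqrt3_pos]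
  have h : Real.sqrt 3 ≤ 2 := by
    calc Real.sqrt 3 ≤ Real.sqrt (2^2) := Real.sqrt_le_sqrt (by norm_num)
      _ = 2 := Real.sqrt_sq (by norm_num)
  nlinarith [Real.pi_gt_three]

lemma th3_ge : (2:ℝ) ≤ th3 := by
  have h5 : (2:ℝ) ≤ Real.sqrt 5 := by
    calc (2:ℝ) = Real.sqrt (2^2) := (Real.sqrt_sq (by norm_num)).symm
      _ ≤ Real.sqrt 5 := Real.sqrt_le_sqrt (by norm_num)
  have := y0_ge
  unfold th3
  nlinarith [y0_pos]

lemma th53_ge : (3:ℝ) ≤ th5 - th3 := by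
  have h21 : (4.5:ℝ) ≤ Real.sqrt 21 := by
    calc (4.5:ℝ) = Real.sqrt (4.5^2) := (Real.sqrt_sq (by norm_num)).symm
      _ ≤ Real.sqrt 21 := Real.sqrt_le_sqrt (by norm_num)
  have h5 : Real.sqrt 5 ≤ 2.25 := by
    calc Real.sqrt 5 ≤ Real.sqrt (2.25^2) := Real.sqrt_le_sqrt (by norm_num)
      _ = 2.25 := Real.sqrt_sq (by norm_num)
  have hy := y0_ge
  have : th5 - th3 = (Real.sqrt 21 - Real.sqrt 5) * (π / Real.sqrt 3) := by
    unfold th3 th5; ring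
  rw [this]
  nlinarith [y0_pos]

lemma hE3 : (7:ℝ) ≤ Real.exp th3 := by
  have h2 : Real.exp 2 ≤ Real.exp th3 := Real.exp_le_exp.2 th3_ge
  have he : Real.exp 2 = Real.exp 1 ^ 2 := by
    rw [show (2:ℝ) = ((2:ℕ):ℝ) * 1 by norm_num, Real.exp_nat_mul]
  linarith [exp_one_sq, he ▸ h2]

lemma hE5 : 19 * Real.exp th3 ≤ Real.exp th5 := by
  have h : Real.exp th5 = Real.exp th3 * Real.exp (th5 - th3) := by
    rw [← Real.exp_add]; ring_nf
  have h3 : Real.exp 3 ≤ Real.exp (th5 - th3) := Real.exp_le_exp.2 th53_ge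
  have he : Real.exp 3 = Real.exp 1 ^ 3 := by
    rw [show (3:ℝ) = ((3:ℕ):ℝ) * 1 by norm_num, Real.exp_nat_mul]
  have h19 : (19:ℝ) ≤ Real.exp (th5 - th3) := by linarith [exp_one_cube, he ▸ h3]
  nlinarith [Real.exp_pos th3]

lemma exp_two_mul (t : ℝ) : Real.exp (2 * t) = Real.exp t ^ 2 := by
  rw [show (2:ℝ) * t = ((2:ℕ):ℝ) * t by norm_num, Real.exp_nat_mul]

lemma pos2core : 0 < a1 + (c3 * (3 * Real.cosh (2 * th3)) + c5 * (5 * Real.cosh (2 * th5))) := by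
  set E3 := Real.exp th3 with hE3def
  set E5 := Real.exp th5 with hE5def
  have hE3p : 0 < E3 := Real.exp_pos _
  have hE5p : 0 < E5 := Real.exp_pos _
  have h7 : (7:ℝ) ≤ E3 := hE3
  have h19 : 19 * E3 ≤ E5 := hE5
  have hexp3 : Real.exp (-th3) ≤ 1 := by
    rw [show (1:ℝ) = Real.exp 0 by rw [Real.exp_zero]]
    exact Real.exp_le_exp.2 (by linarith [th3_pos])
  have hexp23 : Real.exp (-(2 * th3)) ≤ 1 := by
    rw [show (1:ℝ) = Real.exp 0 by rw [Real.exp_zero]]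
    exact Real.exp_le_exp.2 (by linarith [th3_pos])
  have hS3 : (E3 - 1) / 2 ≤ S3 := by
    rw [S3, Real.sinh_eq]
    have := Real.exp_pos (-th3)
    linarith
  have hS5 : S5 ≤ E5 / 2 := by
    rw [S5, Real.sinh_eq]
    have := Real.exp_pos (-th5)
    linarith
  have hC3 : C3 ≤ E3 := by
    rw [C3, Real.cosh_eq]
    linarith
  have hC3' : Real.cosh (2 * th3) ≤ E3 ^ 2 := by
    rw [Real.cosh_eq, exp_two_mul]
    nlinarith
  have hC5' : E5 ^ 2 / 2 ≤ Real.cosh (2 * th5) := by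
    rw [Real.cosh_eq, exp_two_mul]
    have := Real.exp_pos (-(2 * th5))
    linarith
  have hC5p : (0:ℝ) < C5 := C5_pos
  have hcoshp : (0:ℝ) < Real.cosh (2 * th3) := Real.cosh_pos _
  have h21le : Real.sqrt 21 ≤ 5 := by
    calc Real.sqrt 21 ≤ Real.sqrt (5^2) := Real.sqrt_le_sqrt (by norm_num)
      _ = 5 := Real.sqrt_sq (by norm_num)
  have h5ge : (2:ℝ) ≤ Real.sqrt 5 := by
    calc (2:ℝ) = Real.sqrt (2^2) := (Real.sqrt_sq (by norm_num)).symm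
      _ ≤ Real.sqrt 5 := Real.sqrt_le_sqrt (by norm_num)
  have key : Real.sqrt 21 * (S5 * (C3 + Real.cosh (2 * th3)))
      < Real.sqrt 5 * (S3 * (C5 + Real.cosh (2 * th5))) := by
    have i1 : S5 * (C3 + Real.cosh (2 * th3)) ≤ E5 / 2 * (E3 + E3 ^ 2) := by
      apply mul_le_mul hS5 (by linarith) (by linarith [C3_pos, hcoshp]) (by positivity)
    have l1 : Real.sqrt 21 * (S5 * (C3 + Real.cosh (2 * th3)))
        ≤ 5 * (E5 / 2 * (E3 + E3 ^ 2)) := by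
      apply mul_le_mul h21le i1 (by nlinarith [S5_pos, C3_pos, hcoshp]) (by norm_num)
    have l2 : (5:ℝ) * (E5 / 2 * (E3 + E3 ^ 2)) < 2 * ((E3 - 1) / 2 * (E5 ^ 2 / 2)) := by
      have m : (E3 - 1) * (19 * E3) ≤ (E3 - 1) * E5 :=
        mul_le_mul_of_nonneg_left h19 (by linarith)
      nlinarith [m]
    have i2 : (E3 - 1) / 2 * (E5 ^ 2 / 2) ≤ S3 * (C5 + Real.cosh (2 * th5)) := by
      apply mul_le_mul hS3 (by linarith) (by positivity) (le_of_lt S3_pos)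
    have l4 : 2 * ((E3 - 1) / 2 * (E5 ^ 2 / 2))
        ≤ Real.sqrt 5 * (S3 * (C5 + Real.cosh (2 * th5))) := by
      apply mul_le_mul h5ge i2 (by nlinarith) (by positivity)
    linarith
  unfold a1 c3 c5
  nlinarith [key]

/-! ### analyticity -/

lemma analyticAt_rsin (x : ℝ) : AnalyticAt ℝ Real.sin x := by
  have h : Real.sin = fun t : ℝ => (Complex.sin t).re := by
    funext t; rw [Complex.sin_ofReal_re]
  rw [h]
  exact (Complex.reCLM.analyticAt _).comp
    (((Complex.differentiable_sin.analyticAt _).restrictScalars).comp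
      (Complex.ofRealCLM.analyticAt _))

lemma analyticAt_rcos (x : ℝ) : AnalyticAt ℝ Real.cos x := by
  have h : Real.cos = fun t : ℝ => (Complex.cos t).re := by
    funext t; rw [Complex.cos_ofReal_re]
  rw [h]
  exact (Complex.reCLM.analyticAt _).comp
    (((Complex.differentiable_cos.analyticAt _).restrictScalars).comp
      (Complex.ofRealCLM.analyticAt _))

lemma analyticAt_rcosh (x : ℝ) : AnalyticAt ℝ Real.cosh x := by
  have h : Real.cosh = fun t : ℝ => (Real.exp t + Real.exp (-t)) * (1/2) := by
    funext t; rw [Real.cosh_eq]; ring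
  rw [h]
  exact ((analyticAt_rexp.add (analyticAt_rexp.comp analyticAt_id.neg)).mul analyticAt_const)

lemma analyticAt_psi (p : ℝ × ℝ) : AnalyticAt ℝ psi p := by
  have hf : AnalyticAt ℝ (fun q : ℝ × ℝ => q.1) p := analyticAt_fst
  have hs : AnalyticAt ℝ (fun q : ℝ × ℝ => q.2) p := analyticAt_snd
  refine AnalyticAt.add (analyticAt_const.mul ?_) (AnalyticAt.add
    (analyticAt_const.mul ?_) (analyticAt_const.mul ?_))
  · exact ((analyticAt_rsin _).comp hf).mul
      ((analyticAt_rcos _).comp (analyticAt_const.mul hs))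
  · exact ((analyticAt_rsin _).comp (analyticAt_const.mul hf)).mul
      ((analyticAt_rcosh _).comp (analyticAt_const.mul hs))
  · exact ((analyticAt_rsin _).comp (analyticAt_const.mul hf)).mul
      ((analyticAt_rcosh _).comp (analyticAt_const.mul hs))

lemma sin_twist (m : ℤ) (t : ℝ) : Real.sin (2 * m * π - t) = -Real.sin t := by
  rw [show (2:ℝ) * m * π - t = (m:ℝ) * (2 * π) - t by ring, Real.sin_sub,
    Real.cos_int_mul_two_pi]
  have hz : Real.sin ((m:ℝ) * (2 * π)) = 0 := by
    rw [show ((m:ℝ) * (2 * π)) = ((2 * m : ℤ):ℝ) * π by push_cast; ring]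
    exact Real.sin_int_mul_pi _
  rw [hz]; ring

end PsiAux

/-- There is a real-analytic `ψ : ℝ² → ℝ` with: (W1) `Δψ + 4ψ = 0` on `ℝ²`;
(W2) `ψ(kπ,·) ≡ 0` and `ψ` odd about each line `x = kπ`; (W3) `ψ` even about the
`x`-axis; (W4) vanishing gradient and Hessian at `z₀ = (π, π/√3)`;
(W5) `ψ_x(0,0) < 0`, `ψ_x(0, 2π/√3) > 0`, `ψ_{xy}(0, 2π/√3) > 0`. -/
theorem exists_perturbation_psi :
    ∃ ψ : ℝ × ℝ → ℝ,
      AnalyticOnNhd ℝ ψ Set.univ ∧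
      (∀ p : ℝ × ℝ, planarLaplacian ψ p + 4 * ψ p = 0) ∧
      (∀ k : ℤ, ∀ y : ℝ, ψ (k * π, y) = 0) ∧
      (∀ k : ℤ, ∀ x y : ℝ, ψ (2 * k * π - x, y) = -ψ (x, y)) ∧
      (∀ x y : ℝ, ψ (x, -y) = ψ (x, y)) ∧
      fderiv ℝ ψ (π, π / Real.sqrt 3) = 0 ∧
      fderiv ℝ (fderiv ℝ ψ) (π, π / Real.sqrt 3) = 0 ∧
      deriv (fun t => ψ (t, 0)) 0 < 0 ∧
      deriv (fun t => ψ (t, 2 * π / Real.sqrt 3)) 0 > 0 ∧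
      deriv (fun s => deriv (fun t => ψ (t, s)) 0) (2 * π / Real.sqrt 3) > 0 := by
  refine ⟨PsiAux.psi, fun p _ => PsiAux.analyticAt_psi p, ?_, ?_, ?_, ?_, ?_, ?_, ?_, ?_, ?_⟩
  · -- Helmholtz equation
    intro p
    obtain ⟨x, y⟩ := p
    have d1 : deriv (fun s => PsiAux.psi (s, y)) = fun t => PsiAux.px (t, y) :=
      funext fun t => (PsiAux.hderiv_x t y).deriv
    have d2 : deriv (fun s => PsiAux.psi (x, s)) = fun t => PsiAux.py (x, t) :=
      funext fun t => (PsiAux.hderiv_y x t).deriv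
    show deriv (fun t => deriv (fun s => PsiAux.psi (s, y)) t) x +
      deriv (fun t => deriv (fun s => PsiAux.psi (x, s)) t) y + 4 * PsiAux.psi (x, y) = 0
    rw [show (fun t => deriv (fun s => PsiAux.psi (s, y)) t) = fun t => PsiAux.px (t, y) from d1,
      show (fun t => deriv (fun s => PsiAux.psi (x, s)) t) = fun t => PsiAux.py (x, t) from d2,
      (PsiAux.hderiv_xx x y).deriv, (PsiAux.hderiv_yy x y).deriv]
    simp only [PsiAux.pxx, PsiAux.pyy, PsiAux.psi]
    have m3 : Real.sqrt 3 * Real.sqrt 3 = 3 := Real.mul_self_sqrt (by norm_num)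
    have m5 : Real.sqrt 5 * Real.sqrt 5 = 5 := Real.mul_self_sqrt (by norm_num)
    have m21 : Real.sqrt 21 * Real.sqrt 21 = 21 := Real.mul_self_sqrt (by norm_num)
    linear_combination (-(PsiAux.a1 * (Real.sin x * Real.cos (Real.sqrt 3 * y)))) * m3 +
      (PsiAux.c3 * (Real.sin (3 * x) * Real.cosh (Real.sqrt 5 * y))) * m5 +
      (PsiAux.c5 * (Real.sin (5 * x) * Real.cosh (Real.sqrt 21 * y))) * m21
  · -- vanishing on vertical lines x = kπ
    intro k y
    have s1 : Real.sin ((k:ℝ) * π) = 0 := Real.sin_int_mul_pi k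
    have s3 : Real.sin (3 * ((k:ℝ) * π)) = 0 := by
      rw [show (3:ℝ) * ((k:ℝ) * π) = ((3 * k : ℤ):ℝ) * π by push_cast; ring]
      exact Real.sin_int_mul_pi _
    have s5 : Real.sin (5 * ((k:ℝ) * π)) = 0 := by
      rw [show (5:ℝ) * ((k:ℝ) * π) = ((5 * k : ℤ):ℝ) * π by push_cast; ring]
      exact Real.sin_int_mul_pi _
    show PsiAux.a1 * (Real.sin ((k:ℝ) * π) * _) + _ = 0
    rw [s1]
    simp only [PsiAux.psi]
    rw [s3, s5]
    ring
  · -- odd about each line x = kπ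
    intro k x y
    show PsiAux.psi _ = -PsiAux.psi _
    simp only [PsiAux.psi]
    rw [show (2:ℝ) * k * π - x = 2 * (k:ℤ) * π - x by push_cast; ring, PsiAux.sin_twist k x,
      show (3:ℝ) * (2 * ((k:ℤ):ℝ) * π - x) = 2 * ((3 * k : ℤ):ℝ) * π - 3 * x by push_cast; ring,
      PsiAux.sin_twist (3 * k) (3 * x),
      show (5:ℝ) * (2 * ((k:ℤ):ℝ) * π - x) = 2 * ((5 * k : ℤ):ℝ) * π - 5 * x by push_cast; ring,
      PsiAux.sin_twist (5 * k) (5 * x)]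
    ring
  · -- even in y
    intro x y
    simp only [PsiAux.psi]
    rw [show Real.sqrt 3 * -y = -(Real.sqrt 3 * y) by ring,
      show Real.sqrt 5 * -y = -(Real.sqrt 5 * y) by ring,
      show Real.sqrt 21 * -y = -(Real.sqrt 21 * y) by ring,
      Real.cos_neg, Real.cosh_neg, Real.cosh_neg]
  · -- gradient vanishes at z₀
    rw [(PsiAux.hasFDerivAt_psi (π, π / Real.sqrt 3)).fderiv, PsiAux.px0, PsiAux.py0]
    simp
  · -- Hessian vanishes at z₀
    have hf : fderiv ℝ PsiAux.psi =
        fun p => PsiAux.px p • PsiAux.Fx + PsiAux.py p • PsiAux.Fy :=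
      funext fun p => (PsiAux.hasFDerivAt_psi p).fderiv
    rw [hf]
    have h1 : HasFDerivAt PsiAux.px (0 : ℝ × ℝ →L[ℝ] ℝ) (π, π / Real.sqrt 3) := by
      have h := PsiAux.hasFDerivAt_px (π, π / Real.sqrt 3)
      rwa [PsiAux.pxx0, PsiAux.pxy0, zero_smul, zero_smul, add_zero] at h
    have h2 : HasFDerivAt PsiAux.py (0 : ℝ × ℝ →L[ℝ] ℝ) (π, π / Real.sqrt 3) := by
      have h := PsiAux.hasFDerivAt_py (π, π / Real.sqrt 3)
      rwa [PsiAux.pxy0, PsiAux.pyy0, zero_smul, zero_smul, add_zero] at h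
    have h3 := (h1.smul_const PsiAux.Fx).add (h2.smul_const PsiAux.Fy)
    have hz : ((0 : ℝ × ℝ →L[ℝ] ℝ).smulRight PsiAux.Fx +
        (0 : ℝ × ℝ →L[ℝ] ℝ).smulRight PsiAux.Fy) = 0 := by
      ext q <;> simp
    rw [hz] at h3
    exact h3.fderiv
  · -- ∂ψ/∂x (0,0) < 0
    rw [(PsiAux.hderiv_x 0 0).deriv]
    simp only [PsiAux.px, mul_zero, Real.cos_zero, Real.cosh_zero]
    nlinarith [PsiAux.neg1]
  · -- ∂ψ/∂x (0, 2π/√3) > 0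
    rw [(PsiAux.hderiv_x 0 (2 * π / Real.sqrt 3)).deriv]
    have e1 : Real.sqrt 3 * (2 * π / Real.sqrt 3) = 2 * π := by
      have h : Real.sqrt 3 ≠ 0 := ne_of_gt PsiAux.sqrt3_pos
      field_simp
    have e2 : Real.sqrt 5 * (2 * π / Real.sqrt 3) = 2 * PsiAux.th3 := by
      unfold PsiAux.th3; ring
    have e3 : Real.sqrt 21 * (2 * π / Real.sqrt 3) = 2 * PsiAux.th5 := by
      unfold PsiAux.th5; ring
    simp only [PsiAux.px, e1, e2, e3, mul_zero, Real.cos_zero, Real.cos_two_pi]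
    nlinarith [PsiAux.pos2core]
  · -- mixed derivative at (0, 2π/√3) > 0
    have hin : (fun s => deriv (fun t => PsiAux.psi (t, s)) 0) = fun s => PsiAux.px (0, s) :=
      funext fun s => (PsiAux.hderiv_x 0 s).deriv
    rw [hin, (PsiAux.hderiv_xy 0 (2 * π / Real.sqrt 3)).deriv]
    have e1 : Real.sqrt 3 * (2 * π / Real.sqrt 3) = 2 * π := by
      have h : Real.sqrt 3 ≠ 0 := ne_of_gt PsiAux.sqrt3_pos
      field_simp
    have e2 : Real.sqrt 5 * (2 * π / Real.sqrt 3) = 2 * PsiAux.th3 := by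
      unfold PsiAux.th3; ring
    have e3 : Real.sqrt 21 * (2 * π / Real.sqrt 3) = 2 * PsiAux.th5 := by
      unfold PsiAux.th5; ring
    simp only [PsiAux.pxy, e1, e2, e3, mul_zero, Real.cos_zero, Real.sin_two_pi]
    nlinarith [PsiAux.pos3core]
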